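/- arXiv:2309.03772 — 5 statements merged into one kernel-verified Lean document; each statement's English description precedes it below -/
import Mathlib

section
/- Let S ∈ ℚ^{r×n} have rank r and let I be the r×r identity matrix. Then all minors of S of every size 1 ≤ m ≤ r are non-zero if and only if every r×r minor of the block matrix (I, S) is non-zero. -/
/-!
Choosing `r` columns of `(I, S)` means choosing the identity columns `eᵢ` for `i` in some set `L`
of rows, together with `r - |L|` columns of `S`. After permuting rows and columns, the resulting
minor is block upper triangular with diagonal blocks `I` and the minor of `S` on the rows outside
`L` and the chosen columns. Hence the maximal minors of `(I, S)` are, up to sign, exactly the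
square minors of `S` of all sizes, the empty minor being `1`.
-/

open Function

namespace Matrix

variable {m n R : Type*} [CommRing R]

def IsTotallyGeneric (A : Matrix m n R) : Prop :=
  ∀ k : ℕ, ∀ f : Fin k → m, ∀ g : Fin k → n, f.Injective → g.Injective →
    (A.submatrix f g).det ≠ 0

def IsGeneric [Fintype m] [DecidableEq m] (A : Matrix m n R) : Prop :=
  ∀ h : m → n, h.Injective → (A.submatrix id h).det ≠ 0

lemma isTotallyGeneric_iff_one_le_le_card [Fintype m] [Nontrivial R] (A : Matrix m n R) :
    A.IsTotallyGeneric ↔ ∀ k : ℕ, 1 ≤ k → k ≤ Fintype.card m →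
      ∀ f : Fin k → m, ∀ g : Fin k → n, f.Injective → g.Injective →
        (A.submatrix f g).det ≠ 0 := by
  refine ⟨fun hA k _ _ => hA k, fun hA k f g hf hg => ?_⟩
  rcases Nat.eq_zero_or_pos k with rfl | hk
  · simp
  · exact hA k hk (by simpa using Fintype.card_le_of_injective f hf) f g hf hg

lemma IsTotallyGeneric.det_submatrix_ne_zero {A : Matrix m n R} (hA : A.IsTotallyGeneric)
    {β : Type*} [Fintype β] [DecidableEq β] {f : β → m} {g : β → n}
    (hf : f.Injective) (hg : g.Injective) : (A.submatrix f g).det ≠ 0 := by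
  let e := (Fintype.equivFin β).symm
  have := hA _ (f ∘ e) (g ∘ e) (hf.comp e.injective) (hg.comp e.injective)
  rwa [← submatrix_submatrix, det_submatrix_equiv_self] at this

lemma det_submatrix_equiv_equiv_eq_zero_iff [Fintype m] [DecidableEq m] [Fintype n]
    [DecidableEq n] (e₁ e₂ : n ≃ m) (A : Matrix m m R) :
    (A.submatrix e₁ e₂).det = 0 ↔ A.det = 0 := by
  rw [show A.submatrix e₁ e₂ = reindex e₁.symm e₂.symm A from rfl, det_reindex]
  exact ((Equiv.Perm.sign _).isUnit.map (Int.castRingHom R)).mul_right_eq_zero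

lemma det_fromCols_one_submatrix_sumElim [DecidableEq m] {α β : Type*} [Fintype α] [Fintype β]
    [DecidableEq α] [DecidableEq β] (A : Matrix m n R) (e : α ⊕ β ≃ m) (g : β → n) :
    ((fromCols 1 A).submatrix e (Sum.elim (Sum.inl ∘ e ∘ Sum.inl) (Sum.inr ∘ g))).det =
      (A.submatrix (e ∘ Sum.inr) g).det := by
  have : (fromCols 1 A).submatrix e (Sum.elim (Sum.inl ∘ e ∘ Sum.inl) (Sum.inr ∘ g)) =
      fromBlocks 1 (A.submatrix (e ∘ Sum.inl) g) 0 (A.submatrix (e ∘ Sum.inr) g) := by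
    ext (i | i) (j | j) <;> simp [one_apply, e.injective.eq_iff]
  rw [this, det_fromBlocks_zero₂₁, det_one, one_mul]

lemma exists_injective_det_fromCols_one_submatrix_eq [Fintype m] [DecidableEq m]
    (A : Matrix m n R) {β : Type*} [Fintype β] [DecidableEq β] {u : β → m} {g : β → n}
    (hu : u.Injective) (hg : g.Injective) :
    ∃ h : m → m ⊕ n, h.Injective ∧
      ((fromCols 1 A).submatrix id h).det = (A.submatrix u g).det := by
  let e : {i // i ∉ Set.range u} ⊕ β ≃ m :=
    (Equiv.sumComm _ _).trans
      (((Equiv.ofInjective u hu).sumCongr (Equiv.refl _)).trans (Equiv.sumCompl _))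
  have he : e ∘ Sum.inr = u := rfl
  let c := Sum.elim (Sum.inl ∘ e ∘ Sum.inl) (Sum.inr ∘ g)
  refine ⟨c ∘ e.symm, ?_, ?_⟩
  · refine Injective.comp ?_ e.symm.injective
    exact (Sum.inl_injective.comp (e.injective.comp Sum.inl_injective)).sumElim
      (Sum.inr_injective.comp hg) (by simp)
  · rw [← det_submatrix_equiv_self e, submatrix_submatrix, id_comp, comp_assoc,
      e.symm_comp_self, comp_id, det_fromCols_one_submatrix_sumElim, he]

lemma IsTotallyGeneric.det_fromCols_one_submatrix_ne_zero [Fintype m] [DecidableEq m]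
    {A : Matrix m n R} (hA : A.IsTotallyGeneric) {h : m → m ⊕ n} (hh : h.Injective) :
    ((fromCols 1 A).submatrix id h).det ≠ 0 := by
  let p : m → Prop := fun j => (h j).isLeft
  choose ℓ hℓ using fun a : {j // p j} => Sum.isLeft_iff.1 a.2
  choose g hg using fun b : {j // ¬p j} => Sum.isRight_iff.1 (Sum.not_isLeft.1 b.2)
  have hℓ_inj : ℓ.Injective := fun a a' haa' => Subtype.ext (hh (by rw [hℓ, hℓ, haa']))
  have hg_inj : g.Injective := fun b b' hbb' => Subtype.ext (hh (by rw [hg, hg, hbb']))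
  obtain ⟨π, hπ⟩ := Equiv.Perm.exists_extending_pair _ ℓ Subtype.val_injective hℓ_inj
  let σ := Equiv.sumCompl p
  let e := σ.trans π
  have hcols : h ∘ σ = Sum.elim (Sum.inl ∘ e ∘ Sum.inl) (Sum.inr ∘ g) := by
    ext (a | b) <;> simp [σ, e, hℓ, hπ, hg]
  rw [Ne, ← det_submatrix_equiv_equiv_eq_zero_iff e σ, submatrix_submatrix, id_comp,
    hcols, det_fromCols_one_submatrix_sumElim]
  exact hA.det_submatrix_ne_zero (e.injective.comp Sum.inr_injective) hg_inj

theorem isTotallyGeneric_iff_isGeneric_fromCols_one [Fintype m] [DecidableEq m]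
    (A : Matrix m n R) : A.IsTotallyGeneric ↔ (fromCols (1 : Matrix m m R) A).IsGeneric := by
  refine ⟨fun hA h hh => hA.det_fromCols_one_submatrix_ne_zero hh, fun hA k f g hf hg => ?_⟩
  obtain ⟨h, hh, hdet⟩ := exists_injective_det_fromCols_one_submatrix_eq A hf hg
  exact hdet ▸ hA h hh

end Matrix

theorem totally_generic_iff_block_generic_general (r n : ℕ)
    (S : Matrix (Fin r) (Fin n) ℚ) :
    (∀ m : ℕ, 1 ≤ m → m ≤ r → ∀ (f : Fin m → Fin r) (g : Fin m → Fin n),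
        Function.Injective f → Function.Injective g →
        (S.submatrix f g).det ≠ 0) ↔
    (∀ h : Fin r → (Fin r ⊕ Fin n), Function.Injective h →
        (((Matrix.fromCols (1 : Matrix (Fin r) (Fin r) ℚ) S).submatrix id h)).det ≠ 0) := by
  simpa only [Fintype.card_fin, Matrix.IsGeneric] using
    (Matrix.isTotallyGeneric_iff_one_le_le_card S).symm.trans
      (Matrix.isTotallyGeneric_iff_isGeneric_fromCols_one S)

/-- A rank-`r` rational matrix `S` is totally generic (all its `m × m` minors, for
`1 ≤ m ≤ r`, are non-zero) if and only if the block matrix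
`(I, S)` is generic (all its `r × r` minors are non-zero). -/
theorem totally_generic_iff_block_generic (r n : ℕ)
    (S : Matrix (Fin r) (Fin n) ℚ) (hrank : S.rank = r) :
    (∀ m : ℕ, 1 ≤ m → m ≤ r → ∀ (f : Fin m → Fin r) (g : Fin m → Fin n),
        Function.Injective f → Function.Injective g →
        (S.submatrix f g).det ≠ 0) ↔
    (∀ h : Fin r → (Fin r ⊕ Fin n), Function.Injective h →
        (((Matrix.fromCols (1 : Matrix (Fin r) (Fin r) ℚ) S).submatrix id h)).det ≠ 0) :=
  totally_generic_iff_block_generic_general r n S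
end

section
/- Let s ≥ 0 and Δ = 12s+8. Consider the set of columns (0,1), (1,k) for 0 ≤ k ≤ 7s+5, (2,k) for 4s+3 ≤ k ≤ 10s+7 with k odd, and (3,k) for 9s+7 ≤ k ≤ 12s+8 with 3 ∤ k. Then every 2×2 determinant formed from two distinct such columns is non-zero and has absolute value at most Δ, and the total number of columns is Δ + 4. -/
/-!
The determinant of `(a, j)` and `(b, k)` is `a k - b j`. Its bound is interval arithmetic on the
windows of second entries, which are chosen so that the extreme pairs (`(2, 4s + 3)` against
`(2, 10s + 7)`, and `(1, 7s + 5)` against `(3, 9s + 7)`) reach exactly `±(12s + 8)`. It cannot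
vanish: for `a = b` because `j ≠ k`, and otherwise because the second entries of the columns
`(2, k)` are odd and those of the columns `(3, k)` are prime to `3`, so `k - 2j`, `k - 3j` and
`2k - 3j` are never zero.
-/

open Finset

lemma Int.card_filter_odd_Icc {a : ℤ} (ha : Odd a) (n : ℕ) :
    #{k ∈ Icc a (a + 2 * n) | Odd k} = n + 1 := by
  have : {k ∈ Icc a (a + 2 * n) | Odd k} = (Icc (0 : ℤ) n).image (fun m => a + 2 * m) := by
    ext k
    simp only [mem_filter, mem_Icc, mem_image, Int.odd_iff]
    rw [Int.odd_iff] at ha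
    constructor
    · rintro ⟨⟨hak, hkn⟩, hk⟩
      exact ⟨(k - a) / 2, by omega, by omega⟩
    · rintro ⟨m, ⟨hm0, hmn⟩, rfl⟩
      omega
  rw [this, card_image_of_injective _ (fun m m' h => by omega), Int.card_Icc]
  omega

lemma Int.card_filter_not_three_dvd_Icc {a : ℤ} (ha : a % 3 = 1) (n : ℕ) :
    #{k ∈ Icc a (a + 3 * n + 1) | ¬ 3 ∣ k} = 2 * n + 2 := by
  -- the `m`-th integer prime to `3` from `a` on is `a + 3 ⌊m / 2⌋ + (m mod 2)`
  have : {k ∈ Icc a (a + 3 * n + 1) | ¬ 3 ∣ k} =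
      (Icc (0 : ℤ) (2 * n + 1)).image (fun m => a + 3 * (m / 2) + m % 2) := by
    ext k
    simp only [mem_filter, mem_Icc, mem_image]
    constructor
    · rintro ⟨⟨hak, hkn⟩, hk⟩
      exact ⟨2 * ((k - a) / 3) + (k - a) % 3, by omega, by omega⟩
    · rintro ⟨m, ⟨hm0, hmn⟩, rfl⟩
      omega
  rw [this, card_image_of_injective _ (fun m m' h => by omega), Int.card_Icc]
  omega

noncomputable def columns (s : ℕ) : Finset (ℤ × ℤ) :=
  {0} ×ˢ {1} ∪ {1} ×ˢ Icc 0 (7 * (s : ℤ) + 5) ∪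
    {2} ×ˢ {k ∈ Icc (4 * (s : ℤ) + 3) (10 * s + 7) | Odd k} ∪
    {3} ×ˢ {k ∈ Icc (9 * (s : ℤ) + 7) (12 * s + 8) | ¬ 3 ∣ k}

lemma mem_columns {s : ℕ} {q : ℤ × ℤ} :
    q ∈ columns s ↔ q = (0, 1) ∨
      (q.1 = 1 ∧ 0 ≤ q.2 ∧ q.2 ≤ 7 * (s : ℤ) + 5) ∨
      (q.1 = 2 ∧ 4 * (s : ℤ) + 3 ≤ q.2 ∧ q.2 ≤ 10 * (s : ℤ) + 7 ∧ Odd q.2) ∨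
      (q.1 = 3 ∧ 9 * (s : ℤ) + 7 ≤ q.2 ∧ q.2 ≤ 12 * (s : ℤ) + 8 ∧ ¬ 3 ∣ q.2) := by
  obtain ⟨a, j⟩ := q
  simp only [columns, mem_union, mem_product, mem_singleton, mem_filter, mem_Icc, Prod.mk.injEq]
  tauto

lemma disjoint_singleton_product_of_ne {α β : Type*} {a b : α} (h : a ≠ b) {t t' : Finset β} :
    Disjoint ({a} ×ˢ t) ({b} ×ˢ t') :=
  disjoint_product.2 (.inl (disjoint_singleton.2 h))

lemma card_columns (s : ℕ) : #(columns s) = 12 * s + 12 := by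
  rw [columns, card_union_of_disjoint, card_union_of_disjoint, card_union_of_disjoint]
  · have h₂ := Int.card_filter_odd_Icc (a := 4 * s + 3) ⟨2 * s + 1, by ring⟩ (3 * s + 2)
    have h₃ := Int.card_filter_not_three_dvd_Icc (a := 9 * s + 7) (by omega) s
    push_cast at h₂ h₃
    rw [show (4 : ℤ) * s + 3 + 2 * (3 * s + 2) = 10 * s + 7 by ring] at h₂
    rw [show (9 : ℤ) * s + 7 + 3 * s + 1 = 12 * s + 8 by ring] at h₃
    simp only [card_product, card_singleton, one_mul, Int.card_Icc, h₂, h₃]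
    omega
  · exact disjoint_singleton_product_of_ne (by decide)
  · exact disjoint_union_left.2 ⟨disjoint_singleton_product_of_ne (by decide), disjoint_singleton_product_of_ne (by decide)⟩
  · refine disjoint_union_left.2 ⟨disjoint_union_left.2 ⟨?_, ?_⟩, ?_⟩ <;>
      exact disjoint_singleton_product_of_ne (by decide)

lemma det_ne_zero_and_abs_le_of_mem_columns {s : ℕ} {u v : ℤ × ℤ} (hu : u ∈ columns s)
    (hv : v ∈ columns s) (huv : u ≠ v) :
    u.1 * v.2 - u.2 * v.1 ≠ 0 ∧ |u.1 * v.2 - u.2 * v.1| ≤ 12 * s + 8 := by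
  obtain ⟨a, j⟩ := u
  obtain ⟨b, k⟩ := v
  rw [mem_columns] at hu hv
  simp only [Prod.mk.injEq, Ne] at hu hv huv ⊢
  rcases hu with ⟨rfl, rfl⟩ | ⟨rfl, hj⟩ | ⟨rfl, hj, hj', ⟨m, rfl⟩⟩ | ⟨rfl, hj⟩ <;>
    rcases hv with ⟨rfl, rfl⟩ | ⟨rfl, hk⟩ | ⟨rfl, hk, hk', ⟨m', rfl⟩⟩ | ⟨rfl, hk⟩ <;>
    refine ⟨?_, abs_le.2 ⟨?_, ?_⟩⟩ <;> omega

/-- For `Δ = 12s+8`, the set of columns `(0,1)`, `(1,k)` for `0 ≤ k ≤ 7s+5`,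
`(2,k)` for `4s+3 ≤ k ≤ 10s+7` odd, and `(3,k)` for `9s+7 ≤ k ≤ 12s+8` with `3 ∤ k`,
has `Δ + 4` elements and all pairwise `2 × 2` determinants are non-zero with absolute
value at most `Δ`. -/
theorem construction_12s_plus_8 (s : ℕ) (Δ : ℤ) (hΔ : Δ = 12 * (s : ℤ) + 8)
    (A : Set (ℤ × ℤ))
    (hA : A = {q : ℤ × ℤ | q = (0, 1) ∨
      (q.1 = 1 ∧ 0 ≤ q.2 ∧ q.2 ≤ 7 * (s : ℤ) + 5) ∨
      (q.1 = 2 ∧ 4 * (s : ℤ) + 3 ≤ q.2 ∧ q.2 ≤ 10 * (s : ℤ) + 7 ∧ Odd q.2) ∨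
      (q.1 = 3 ∧ 9 * (s : ℤ) + 7 ≤ q.2 ∧ q.2 ≤ 12 * (s : ℤ) + 8 ∧ ¬ (3 ∣ q.2))}) :
    (∀ u ∈ A, ∀ v ∈ A, u ≠ v →
        u.1 * v.2 - u.2 * v.1 ≠ 0 ∧ |u.1 * v.2 - u.2 * v.1| ≤ Δ) ∧
    (A.ncard : ℤ) = Δ + 4 := by
  have hA' : A = columns s := hA ▸ Set.ext fun _ => mem_columns.symm
  subst hΔ hA'
  refine ⟨fun u hu v hv huv => det_ne_zero_and_abs_le_of_mem_columns hu hv huv, ?_⟩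
  rw [Set.ncard_coe_finset, card_columns]
  push_cast
  ring
end

section
/- Let A = {a_1, …, a_n} ⊆ ℤ^r be a finite set such that every r×r determinant of r points from A has absolute value at most Δ, and let Q = conv(A ∪ (−A)). If C = conv{±a_{i_1}, …, ±a_{i_r}} is a crosspolytope of maximal volume among those with vertices ±points of A, then Q is contained in the parallelepiped W = {∑_{j=1}^r γ_j a_{i_j} : −1 ≤ γ_j ≤ 1}, and consequently vol(Q) ≤ 2^r · Δ. -/
/-! Let `B` be the matrix with columns `a_{i₁}, …, a_{i_r}`. By Cramer's rule the coordinates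
of `a i` in this basis are the quotients
`det(B with column j replaced by a i) / det B`; maximality of `|det B|` bounds them by `1`
in absolute value. So `±a i ∈ W`, hence `Q ⊆ W` by convexity, and `W` is the image of the cube
`[-1, 1]^r` under `B`, of volume `2^r |det B| ≤ 2^r Δ`. -/

open MeasureTheory

namespace Matrix

open scoped Matrix

variable {ι : Type*}

theorem updateCol_of_columns [DecidableEq ι] {κ R : Type*} (v : ι → κ → R) (j : ι) (x : κ → R) :
    (of fun k j' => v j' k).updateCol j x = of fun k j' => Function.update v j x j' k := by
  ext k j'
  by_cases h : j' = j <;> simp [h]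

theorem mulVec_of_columns [Fintype ι] {R : Type*} [CommSemiring R] (v : ι → ι → R) (γ : ι → R) :
    (of fun k j => v j k) *ᵥ γ = ∑ j, γ j • v j := by
  ext k
  simp [mulVec, dotProduct, mul_comm]

theorem exists_mulVec_eq_abs_le_one_of_abs_det_updateCol_le [Fintype ι] [DecidableEq ι]
    {R : Type*} [Field R] [LinearOrder R] [IsStrictOrderedRing R] {M : Matrix ι ι R} {x : ι → R}
    (hM : M.det ≠ 0) (hx : ∀ j, |(M.updateCol j x).det| ≤ |M.det|) :
    ∃ γ : ι → R, (∀ j, |γ j| ≤ 1) ∧ M *ᵥ γ = x := by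
  refine ⟨M.det⁻¹ • cramer M x, fun j => ?_, ?_⟩
  · rw [Pi.smul_apply, smul_eq_mul, abs_mul, abs_inv, cramer_apply, inv_mul_le_one₀ (abs_pos.mpr hM)]
    exact hx j
  · rw [mulVec_smul, mulVec_cramer, smul_smul, inv_mul_cancel₀ hM, one_smul]

end Matrix

section SymmParallelepiped

variable {ι : Type*} [Fintype ι]

def symmParallelepiped {E : Type*} [AddCommGroup E] [Module ℝ E] (v : ι → E) : Set E :=
  {x | ∃ γ : ι → ℝ, (∀ j, -1 ≤ γ j ∧ γ j ≤ 1) ∧ x = ∑ j, γ j • v j}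

theorem symmParallelepiped_eq_image [DecidableEq ι] (v : ι → ι → ℝ) :
    symmParallelepiped v = Matrix.toLin' (Matrix.of fun k j => v j k) '' Set.Icc (-1) 1 := by
  ext x
  simp only [symmParallelepiped, Set.mem_ofPred_eq, Set.mem_image, Set.mem_Icc, Pi.le_def,
    Matrix.toLin'_apply, Matrix.mulVec_of_columns, ← forall_and, Pi.neg_apply, Pi.one_apply]
  exact ⟨fun ⟨γ, hγ, hx⟩ => ⟨γ, hγ, hx.symm⟩, fun ⟨γ, hγ, hx⟩ => ⟨γ, hγ, hx.symm⟩⟩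

theorem convex_symmParallelepiped [DecidableEq ι] (v : ι → ι → ℝ) :
    Convex ℝ (symmParallelepiped v) := by
  rw [symmParallelepiped_eq_image]
  exact (convex_Icc _ _).linear_image _

theorem neg_mem_symmParallelepiped {E : Type*} [AddCommGroup E] [Module ℝ E] {v : ι → E} {x : E}
    (hx : x ∈ symmParallelepiped v) : -x ∈ symmParallelepiped v := by
  obtain ⟨γ, hγ, rfl⟩ := hx
  refine ⟨-γ, fun j => ?_, by simp [Finset.sum_neg_distrib]⟩
  have := hγ j
  constructor <;> simp only [Pi.neg_apply] <;> linarith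

theorem volume_symmParallelepiped [DecidableEq ι] (v : ι → ι → ℝ) :
    volume (symmParallelepiped v) =
      ENNReal.ofReal (2 ^ Fintype.card ι * |(Matrix.of fun k j => v j k).det|) := by
  rw [symmParallelepiped_eq_image, Measure.addHaar_image_linearMap, LinearMap.det_toLin',
    Real.volume_Icc_pi, mul_comm, ENNReal.ofReal_mul (by positivity)]
  norm_num [ENNReal.ofReal_pow]

theorem mem_symmParallelepiped_of_abs_det_le [DecidableEq ι] {κ : Type*} (v : κ → ι → ℝ)
    (b : ι → κ) (hb : (Matrix.of fun k j => v (b j) k).det ≠ 0)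
    (hmax : ∀ g : ι → κ,
      |(Matrix.of fun k j => v (g j) k).det| ≤ |(Matrix.of fun k j => v (b j) k).det|)
    (i : κ) : v i ∈ symmParallelepiped (v ∘ b) := by
  obtain ⟨γ, hγ, hγv⟩ := Matrix.exists_mulVec_eq_abs_le_one_of_abs_det_updateCol_le (x := v i) hb
    fun j => by
      rw [Matrix.updateCol_of_columns, ← Function.comp_def v b, ← Function.comp_update]
      exact hmax _
  exact ⟨γ, fun j => abs_le.mp (hγ j), by rw [← hγv, ← Matrix.mulVec_of_columns]; rfl⟩

theorem convexHull_union_neg_subset_symmParallelepiped [DecidableEq ι] {κ : Type*}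
    (v : κ → ι → ℝ) (b : ι → κ) (hb : (Matrix.of fun k j => v (b j) k).det ≠ 0)
    (hmax : ∀ g : ι → κ,
      |(Matrix.of fun k j => v (g j) k).det| ≤ |(Matrix.of fun k j => v (b j) k).det|) :
    convexHull ℝ (Set.range v ∪ Set.range (-v)) ⊆ symmParallelepiped (v ∘ b) := by
  refine convexHull_min ?_ (convex_symmParallelepiped _)
  rintro x (⟨i, rfl⟩ | ⟨i, rfl⟩)
  · exact mem_symmParallelepiped_of_abs_det_le v b hb hmax i
  · exact neg_mem_symmParallelepiped (mem_symmParallelepiped_of_abs_det_le v b hb hmax i)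

end SymmParallelepiped

/-- If every `r`-subset of `A ⊆ ℤ^r` has determinant at most `Δ` in absolute value and
`C = conv{±a_{i₁}, …, ±a_{i_r}}` is a crosspolytope of maximal volume with vertices among
`±A`, then `Q = conv(A ∪ −A)` is contained in the parallelepiped
`W = {∑ γ_j a_{i_j} : −1 ≤ γ_j ≤ 1}`, and `vol(Q) ≤ 2^r · Δ`. -/
theorem crosspolytope_parallelepiped_bound (r n : ℕ) (Δ : ℤ)
    (a : Fin n → (Fin r → ℤ))
    (hΔ : ∀ f : Fin r → Fin n, |(Matrix.of fun i j => a (f j) i).det| ≤ Δ)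
    (b : Fin r → Fin n)
    (hind : (Matrix.of fun i j => a (b j) i).det ≠ 0)
    (hmax : ∀ g : Fin r → Fin n,
      |(Matrix.of fun i j => a (g j) i).det| ≤ |(Matrix.of fun i j => a (b j) i).det|) :
    (convexHull ℝ (Set.range (fun i => fun k => (a i k : ℝ)) ∪
        Set.range (fun i => fun k => -(a i k : ℝ))) ⊆
      {x : Fin r → ℝ | ∃ γ : Fin r → ℝ, (∀ j, -1 ≤ γ j ∧ γ j ≤ 1) ∧
        x = ∑ j, γ j • (fun k => (a (b j) k : ℝ))}) ∧
    volume (convexHull ℝ (Set.range (fun i => fun k => (a i k : ℝ)) ∪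
        Set.range (fun i => fun k => -(a i k : ℝ)))) ≤
      ENNReal.ofReal (2 ^ r * (Δ : ℝ)) := by
  set v : Fin n → Fin r → ℝ := fun i k => (a i k : ℝ)
  have hdet (g : Fin r → Fin n) :
      (Matrix.of fun k j => v (g j) k).det = ((Matrix.of fun k j => a (g j) k).det : ℝ) :=
    (Int.cast_det _).symm
  have hsub : convexHull ℝ (Set.range v ∪ Set.range (-v)) ⊆ symmParallelepiped (v ∘ b) :=
    convexHull_union_neg_subset_symmParallelepiped v b (by rw [hdet]; exact_mod_cast hind)
      fun g => by rw [hdet, hdet, ← Int.cast_abs, ← Int.cast_abs]; exact_mod_cast hmax g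
  refine ⟨hsub, (measure_mono hsub).trans ?_⟩
  rw [volume_symmParallelepiped, Fintype.card_fin]
  gcongr
  rw [Function.comp_def, hdet, ← Int.cast_abs]
  exact_mod_cast hΔ b
end

section
/- Let A ⊆ ℤ^r be a finite set with rank r such that every r×r determinant of points from A is non-zero, let L = {x ∈ ℝ^r : x_r = 0}, and for ℓ ∈ ℤ \ {0} let C_ℓ = A ∩ (L + ℓ·e_r). If every r-subset of A has determinant of absolute value at most Δ, then the projection S_ℓ of C_ℓ onto the first r−1 coordinates is a set in ℤ^{r-1} such that every r points s_1,…,s_r ∈ S_ℓ satisfy 0 < |det(s_2−s_1, …, s_r−s_1)| ≤ Δ/|ℓ|. -/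
/-! Subtracting the first column from the others and expanding along the last row, whose only
non-zero entry is then `ℓ`, gives `|det(c₁, …, c_{d+1})| = |ℓ| · |det(s₂ − s₁, …, s_{d+1} − s₁)|`;
genericity and `Δ`-modularity of `A` bound the left side. -/

namespace Matrix

variable {R : Type*} [CommRing R]

theorem det_eq_of_last_row_const {d : ℕ} (M : Matrix (Fin (d + 1)) (Fin (d + 1)) R) (ℓ : R)
    (hlast : ∀ k, M (Fin.last d) k = ℓ) :
    M.det = (-1) ^ d * ℓ *
      (of fun (j k : Fin d) => M j.castSucc k.succ - M j.castSucc 0).det := by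
  set N : Matrix (Fin (d + 1)) (Fin (d + 1)) R :=
    of fun i k => if k = 0 then M i 0 else M i k - M i 0
  have hcol : M.det = N.det := by
    rw [← det_transpose M, ← det_transpose N]
    refine det_eq_of_forall_row_eq_smul_add_const (fun k => if k = 0 then 0 else 1) 0 rfl ?_
    intro k i
    by_cases hk : k = 0 <;> simp [N, hk]
  have hN_last : ∀ k, k ≠ 0 → N (Fin.last d) k = 0 := by
    intro k hk
    simp [N, hk, hlast]
  rw [hcol, det_succ_row N (Fin.last d), Fintype.sum_eq_single 0 fun k hk => by
    simp [hN_last k hk]]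
  simp [N, hlast, Fin.succ_ne_zero, submatrix]

end Matrix

theorem abs_det_eq_abs_mul_abs_det_sub {R : Type*} [CommRing R] [LinearOrder R] [IsOrderedRing R]
    {d : ℕ} (c : Fin (d + 1) → Fin (d + 1) → R) (ℓ : R) (hlast : ∀ i, c i (Fin.last d) = ℓ) :
    |(Matrix.of fun i j => c j i).det| =
      |ℓ| * |(Matrix.of fun (j k : Fin d) => c k.succ j.castSucc - c 0 j.castSucc).det| := by
  rw [Matrix.det_eq_of_last_row_const _ ℓ hlast, abs_mul, abs_mul, abs_pow, abs_neg, abs_one,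
    one_pow, one_mul]
  rfl

theorem slice_projection_volume_bound_general (d : ℕ) (Δ : ℤ) (A : Set (Fin (d + 1) → ℤ))
    (hgen : ∀ c : Fin (d + 1) → (Fin (d + 1) → ℤ), (∀ i, c i ∈ A) →
      Function.Injective c → (Matrix.of fun i j => c j i).det ≠ 0)
    (hmod : ∀ c : Fin (d + 1) → (Fin (d + 1) → ℤ), (∀ i, c i ∈ A) →
      Function.Injective c → |(Matrix.of fun i j => c j i).det| ≤ Δ)
    (ℓ : ℤ)
    (c : Fin (d + 1) → (Fin (d + 1) → ℤ)) (hcA : ∀ i, c i ∈ A)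
    (hcinj : Function.Injective c)
    (hlast : ∀ i, c i (Fin.last d) = ℓ) :
    0 < |(Matrix.of fun (j : Fin d) (k : Fin d) =>
        c k.succ j.castSucc - c 0 j.castSucc).det| ∧
    (|(Matrix.of fun (j : Fin d) (k : Fin d) =>
        c k.succ j.castSucc - c 0 j.castSucc).det| : ℚ) ≤ (Δ : ℚ) / |(ℓ : ℚ)| := by
  set S := |(Matrix.of fun (j k : Fin d) => c k.succ j.castSucc - c 0 j.castSucc).det|
  have hkey := abs_det_eq_abs_mul_abs_det_sub c ℓ hlast
  have hbound : |ℓ| * S ≤ Δ := hkey ▸ hmod c hcA hcinj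
  obtain ⟨hℓ, hS⟩ : |ℓ| ≠ 0 ∧ S ≠ 0 := by
    rw [← mul_ne_zero_iff, ← hkey, abs_ne_zero]
    exact hgen c hcA hcinj
  have hℓQ : (0 : ℚ) < |(ℓ : ℚ)| := by exact_mod_cast (abs_nonneg ℓ).lt_of_ne' hℓ
  refine ⟨(abs_nonneg _).lt_of_ne' hS, ?_⟩
  rw [le_div_iff₀' hℓQ]
  exact_mod_cast hbound

/-- Let `A ⊆ ℤ^{d+1}` be a finite generic `Δ`-modular set of points (all `(d+1) × (d+1)`
determinants of distinct points of `A` are non-zero with absolute value at most `Δ`).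
If `c₁, …, c_{d+1}` are distinct points of `A` whose last coordinate equals `ℓ ≠ 0`, then
their projections `s₁, …, s_{d+1}` onto the first `d` coordinates satisfy
`0 < |det(s₂ − s₁, …, s_{d+1} − s₁)| ≤ Δ / |ℓ|`. -/
theorem slice_projection_volume_bound (d : ℕ) (Δ : ℤ) (A : Set (Fin (d + 1) → ℤ))
    (hfin : A.Finite)
    (hgen : ∀ c : Fin (d + 1) → (Fin (d + 1) → ℤ), (∀ i, c i ∈ A) →
      Function.Injective c → (Matrix.of fun i j => c j i).det ≠ 0)
    (hmod : ∀ c : Fin (d + 1) → (Fin (d + 1) → ℤ), (∀ i, c i ∈ A) →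
      Function.Injective c → |(Matrix.of fun i j => c j i).det| ≤ Δ)
    (ℓ : ℤ) (hℓ : ℓ ≠ 0)
    (c : Fin (d + 1) → (Fin (d + 1) → ℤ)) (hcA : ∀ i, c i ∈ A)
    (hcinj : Function.Injective c)
    (hlast : ∀ i, c i (Fin.last d) = ℓ) :
    0 < |(Matrix.of fun (j : Fin d) (k : Fin d) =>
        c k.succ j.castSucc - c 0 j.castSucc).det| ∧
    (|(Matrix.of fun (j : Fin d) (k : Fin d) =>
        c k.succ j.castSucc - c 0 j.castSucc).det| : ℚ) ≤ (Δ : ℚ) / |(ℓ : ℚ)| :=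
  slice_projection_volume_bound_general d Δ A hgen hmod ℓ c hcA hcinj hlast
end

section
/- For positive integers r and Δ with r ≥ 2 and r ≥ 2Δ − 1, the maximum number of columns of an integer matrix A ∈ ℤ^{r×n} of rank r, with pairwise distinct columns, such that every r×r minor of A is non-zero with absolute value at most Δ, equals r + 1. -/
/-!
The lower bound is witnessed by the columns `e₁, …, e_r, (Δ, …, Δ)`, whose `r × r` minors are
`±1` and `±Δ`.

For the upper bound, Bertrand's postulate and `r ≥ 2Δ - 1` give a prime `p` with `Δ < p ≤ r`.
No minor vanishes mod `p`, so any `r` columns are linearly independent over `𝔽_p`. If there were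
`r + 2` columns, take `r` of them as a basis and let `α`, `β` be the coordinate vectors of two more.
Exchanging one of them for the basis vector `bᵢ` keeps independence, so `αᵢ, βᵢ ≠ 0`; exchanging
both for `bᵢ, bⱼ` forces `βᵢ αⱼ ≠ αᵢ βⱼ`. Hence the `r` ratios `βᵢ / αᵢ` are distinct elements of
`𝔽_p^×`, which has only `p - 1 < r` elements.
-/

open Function Module Submodule

theorem Function.Injective.update {α β : Type*} [DecidableEq α] {f : α → β} (hf : Injective f)
    (a : α) {b : β} (hb : b ∉ Set.range f) : Injective (update f a b) := by
  intro x y h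
  by_cases hx : x = a <;> by_cases hy : y = a
  · rw [hx, hy]
  · rw [hx, update_self, update_of_ne hy] at h
    exact absurd ⟨y, h.symm⟩ hb
  · rw [hy, update_self, update_of_ne hx] at h
    exact absurd ⟨x, h⟩ hb
  · rw [update_of_ne hx, update_of_ne hy] at h
    exact hf h

namespace Module.Basis

variable {ι K V : Type*} [DecidableEq ι] [Field K] [AddCommGroup V] [Module K V]

theorem repr_ne_zero_of_linearIndependent_update (b : Basis ι K V) {i : ι} {x : V}
    (h : LinearIndependent K (update (⇑b) i x)) : b.repr x i ≠ 0 := by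
  intro hx
  apply h.notMem_span_image (s := {i}ᶜ) (Set.notMem_compl_iff.mpr rfl)
  have himage : update (⇑b) i x '' {i}ᶜ = b '' {i}ᶜ :=
    Set.image_congr fun k hk => update_of_ne hk x b
  rw [update_self, himage, b.mem_span_image]
  rintro k hk rfl
  exact Finsupp.mem_support_iff.mp hk hx

theorem mul_repr_ne_of_linearIndependent_update_update (b : Basis ι K V) {i j : ι} (hij : i ≠ j)
    {x y : V} (hy : b.repr y i ≠ 0) (h : LinearIndependent K (update (update (⇑b) i x) j y)) :
    b.repr y i * b.repr x j ≠ b.repr x i * b.repr y j := by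
  intro hxy
  set u := update (update (⇑b) i x) j y
  apply h.notMem_span_image (s := {i}ᶜ) (Set.notMem_compl_iff.mpr rfl)
  set z := b.repr y i • x - b.repr x i • y
  -- `z` has vanishing `i`- and `j`-coordinates, so `x = (b.repr y i)⁻¹ • (z + b.repr x i • y)`
  -- lies in the span of the other vectors of `u`.
  have hz : z ∈ span K (b '' {i, j}ᶜ) := by
    rw [b.mem_span_image]
    rintro k hk (rfl | rfl)
    · simp [z, mul_comm] at hk
    · refine Finsupp.mem_support_iff.mp hk ?_
      simp only [z, map_sub, map_smul, Finsupp.sub_apply, Finsupp.smul_apply, smul_eq_mul]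
      linear_combination hxy
  have hbu : b '' {i, j}ᶜ ⊆ u '' {i}ᶜ := by
    rintro _ ⟨k, hk, rfl⟩
    simp only [Set.mem_compl_iff, Set.mem_insert_iff, Set.mem_singleton_iff, not_or] at hk
    exact ⟨k, hk.1, by simp [u, update_of_ne hk.1, update_of_ne hk.2]⟩
  have hyu : y ∈ u '' {i}ᶜ := ⟨j, Ne.symm hij, update_self _ _ _⟩
  have hx : u i = (b.repr y i)⁻¹ • (z + b.repr x i • y) := by
    simp [u, update_of_ne hij, z, smul_smul, hy]
  rw [hx]
  exact smul_mem _ _ (add_mem (span_mono hbu hz) (smul_mem _ _ (subset_span hyu)))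

theorem card_lt_card_of_linearIndependent_update [Fintype ι] [Fintype K] (b : Basis ι K V)
    (x y : V) (hx : ∀ i, LinearIndependent K (update (⇑b) i x))
    (hy : ∀ i, LinearIndependent K (update (⇑b) i y))
    (hxy : ∀ i j, i ≠ j → LinearIndependent K (update (update (⇑b) i x) j y)) :
    Fintype.card ι < Fintype.card K := by
  classical
  by_contra! hK
  have hx0 i := b.repr_ne_zero_of_linearIndependent_update (hx i)
  have hy0 i := b.repr_ne_zero_of_linearIndependent_update (hy i)
  let ratio i : Kˣ := Units.mk0 (b.repr y i / b.repr x i) (div_ne_zero (hy0 i) (hx0 i))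
  obtain ⟨i, j, hij, hratio⟩ :=
    Fintype.exists_ne_map_eq_of_card_lt ratio ((card_units_lt K).trans_le hK)
  apply b.mul_repr_ne_of_linearIndependent_update_update hij (hy0 i) (hxy i j hij)
  have := congrArg Units.val hratio
  simp only [ratio, Units.val_mk0] at this
  rw [div_eq_div_iff (hx0 i) (hx0 j)] at this
  linear_combination this

end Module.Basis

theorem card_le_add_one_of_forall_linearIndependent {K V ι : Type*} [Field K] [Fintype K]
    [AddCommGroup V] [Module K V] [Fintype ι] {r : ℕ} (hV : finrank K V = r)
    (hK : Fintype.card K ≤ r) (c : ι → V)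
    (hc : ∀ f : Fin r → ι, Injective f → LinearIndependent K (c ∘ f)) :
    Fintype.card ι ≤ r + 1 := by
  by_contra! hι
  obtain ⟨g⟩ : Nonempty (Fin r ⊕ Fin 2 ↪ ι) :=
    Function.Embedding.nonempty_of_card_le (by simp; omega)
  have : Nonempty (Fin r) := ⟨⟨0, Fintype.card_pos.trans_le hK⟩⟩
  let f₀ : Fin r → ι := g ∘ Sum.inl
  have hf₀ : Injective f₀ := g.injective.comp Sum.inl_injective
  have hnew (a : Fin 2) : g (.inr a) ∉ Set.range f₀ := by
    rintro ⟨k, hk⟩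
    simpa [f₀] using g.injective hk
  let b := basisOfLinearIndependentOfCardEqFinrank (hc f₀ hf₀) (by simp [hV])
  have hupdate (i : Fin r) (t : ι) : update (⇑b) i (c t) = c ∘ update f₀ i t := by
    rw [coe_basisOfLinearIndependentOfCardEqFinrank, comp_update]
  have := b.card_lt_card_of_linearIndependent_update (c (g (.inr 0))) (c (g (.inr 1)))
    (fun i => hupdate i _ ▸ hc _ (hf₀.update i (hnew 0)))
    (fun i => hupdate i _ ▸ hc _ (hf₀.update i (hnew 1)))
    (fun i j _ => by
      rw [hupdate, ← comp_update]
      refine hc _ ((hf₀.update i (hnew 0)).update j ?_)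
      rintro ⟨k, hk⟩
      by_cases hki : k = i
      · simp [hki] at hk
      · exact hnew 1 ⟨k, by simpa [hki] using hk⟩)
  simp only [Fintype.card_fin] at this
  omega

theorem linearIndependent_col_map_intCast {m : Type*} [Fintype m] [DecidableEq m] {p : ℕ}
    [Fact p.Prime] (M : Matrix m m ℤ) (h0 : M.det ≠ 0) (hp : |M.det| < p) :
    LinearIndependent (ZMod p) (M.map (Int.cast : ℤ → ZMod p)).col := by
  rw [Matrix.linearIndependent_cols_iff_isUnit, Matrix.isUnit_iff_isUnit_det, isUnit_iff_ne_zero,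
    ← Int.cast_det, Ne, ZMod.intCast_zmod_eq_zero_iff_dvd]
  exact fun hdvd => (Int.le_of_dvd (abs_pos.mpr h0) ((dvd_abs _ _).mpr hdvd)).not_gt hp

theorem card_le_of_abs_det_submatrix_lt {r n p : ℕ} [Fact p.Prime] (hpr : p ≤ r)
    (A : Matrix (Fin r) (Fin n) ℤ)
    (hA : ∀ f : Fin r → Fin n, Injective f →
      (A.submatrix id f).det ≠ 0 ∧ |(A.submatrix id f).det| < p) :
    n ≤ r + 1 := by
  simpa using card_le_add_one_of_forall_linearIndependent (Module.finrank_fin_fun (ZMod p))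
    (by rwa [ZMod.card]) (A.map (Int.cast : ℤ → ZMod p)).col
    fun f hf => linearIndependent_col_map_intCast _ (hA f hf).1 (hA f hf).2

theorem Nat.exists_prime_lt_le_of_two_mul_le {d r : ℕ} (hd : 1 ≤ d) (hr : 2 ≤ r)
    (hdr : 2 * d ≤ r + 1) : ∃ p, p.Prime ∧ d < p ∧ p ≤ r := by
  obtain ⟨p, hp, hdp, hpd⟩ := Nat.exists_prime_lt_and_le_two_mul d (by omega)
  refine ⟨p, hp, hdp, ?_⟩
  rcases hpd.lt_or_eq with hpd | rfl
  · omega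
  · have := (hp.even_iff).mp (even_two_mul d)
    omega

theorem Fin.exists_perm_eq_castSucc_comp {r : ℕ} {f : Fin r → Fin (r + 1)} (hf : Injective f)
    (hlast : Fin.last r ∉ Set.range f) : ∃ σ : Equiv.Perm (Fin r), f = Fin.castSucc ∘ σ := by
  have hne k : f k ≠ Fin.last r := fun h => hlast ⟨k, h⟩
  have hinj : Injective fun k => (f k).castPred (hne k) :=
    fun k k' h => hf (by simpa using congrArg Fin.castSucc h)
  exact ⟨.ofBijective _ (Finite.injective_iff_bijective.mp hinj),
    funext fun k => (Fin.castSucc_castPred (f k) (hne k)).symm⟩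

namespace Matrix

variable {R : Type*} [CommRing R] {r : ℕ}

def identityAppendCol (v : Fin r → R) : Matrix (Fin r) (Fin (r + 1)) R :=
  of fun i j => Fin.lastCases (v i) (fun k => (1 : Matrix (Fin r) (Fin r) R) i k) j

variable (v : Fin r → R)

@[simp]
theorem identityAppendCol_apply_castSucc (i k : Fin r) :
    identityAppendCol v i k.castSucc = (1 : Matrix (Fin r) (Fin r) R) i k := by
  simp [identityAppendCol]

@[simp]
theorem identityAppendCol_apply_last (i : Fin r) : identityAppendCol v i (Fin.last r) = v i := by
  simp [identityAppendCol]

theorem identityAppendCol_submatrix_castSucc :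
    (identityAppendCol v).submatrix id Fin.castSucc = 1 := by
  ext i k
  simp

theorem identityAppendCol_submatrix_swap_castSucc (m : Fin r) :
    (identityAppendCol v).submatrix id (Equiv.swap m.castSucc (Fin.last r) ∘ Fin.castSucc) =
      (1 : Matrix (Fin r) (Fin r) R).updateCol m v := by
  ext i k
  by_cases hk : k = m
  · simp [hk]
  · simp [hk, Equiv.swap_apply_of_ne_of_ne]

theorem det_identityAppendCol_submatrix {f : Fin r → Fin (r + 1)} (hf : Injective f) :
    (∃ σ : Equiv.Perm (Fin r), ((identityAppendCol v).submatrix id f).det = σ.sign) ∨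
      ∃ σ : Equiv.Perm (Fin r), ∃ m : Fin r,
        ((identityAppendCol v).submatrix id f).det = σ.sign * v m := by
  obtain ⟨m, hm⟩ : ∃ m, m ∉ Set.range f := by
    by_contra! h
    simpa using Fintype.card_le_of_surjective f h
  induction m using Fin.lastCases with
  | last =>
    obtain ⟨σ, rfl⟩ := Fin.exists_perm_eq_castSucc_comp hf hm
    refine .inl ⟨σ, ?_⟩
    exact (det_permute' σ ((identityAppendCol v).submatrix id Fin.castSucc)).trans
      (by rw [identityAppendCol_submatrix_castSucc, det_one, mul_one])
  | cast m =>
    set τ := Equiv.swap m.castSucc (Fin.last r)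
    obtain ⟨σ, hσ⟩ := Fin.exists_perm_eq_castSucc_comp (τ.injective.comp hf) (by
      rintro ⟨k, hk⟩
      exact hm ⟨k, by simpa [τ, Equiv.swap_apply_eq_iff] using hk⟩)
    have hf : f = τ ∘ Fin.castSucc ∘ σ := by
      rw [← hσ, ← comp_assoc, ← Equiv.Perm.coe_mul, Equiv.swap_mul_self, Equiv.Perm.coe_one,
        id_comp]
    refine .inr ⟨σ, m, ?_⟩
    rw [hf, ← comp_assoc]
    exact (det_permute' σ ((identityAppendCol v).submatrix id (τ ∘ Fin.castSucc))).trans (by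
      rw [identityAppendCol_submatrix_swap_castSucc, ← cramer_apply, cramer_one]
      rfl)

theorem rank_identityAppendCol [StrongRankCondition R] : (identityAppendCol v).rank = r := by
  refine le_antisymm ((identityAppendCol v).rank_le_card_height.trans_eq (Fintype.card_fin r)) ?_
  calc r = (1 : Matrix (Fin r) (Fin r) R).rank := by rw [rank_one, Fintype.card_fin]
    _ ≤ (identityAppendCol v).rank := by
      rw [← identityAppendCol_submatrix_castSucc v]
      exact rank_submatrix_le _ _ _

theorem injective_col_identityAppendCol_const [Nontrivial R] (hr : 2 ≤ r) {c : R} (hc : c ≠ 0) :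
    Injective (identityAppendCol fun _ : Fin r => c).col := by
  have hcol (k : Fin r) : ∃ i, identityAppendCol (fun _ => c) i k.castSucc ≠ c := by
    have := Fin.nontrivial_iff_two_le.mpr hr
    obtain ⟨i, hi⟩ := exists_ne k
    exact ⟨i, by simpa [one_apply_ne hi] using hc.symm⟩
  intro j j' h
  have hentry i : identityAppendCol (fun _ => c) i j = identityAppendCol (fun _ => c) i j' :=
    congrFun h i
  induction j using Fin.lastCases <;> induction j' using Fin.lastCases
  case last.last => rfl
  case last.cast k =>
    obtain ⟨i, hi⟩ := hcol k
    exact absurd (hentry i).symm (by simpa using hi)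
  case cast.last k =>
    obtain ⟨i, hi⟩ := hcol k
    exact absurd (hentry i) (by simpa using hi)
  case cast.cast k k' =>
    by_contra hkk'
    simpa [one_apply_ne (Fin.castSucc_injective r |>.ne_iff.mp hkk')] using hentry k

theorem abs_det_identityAppendCol_const_submatrix {r : ℕ} (c : ℤ)
    {f : Fin r → Fin (r + 1)} (hf : Injective f) :
    |((identityAppendCol fun _ => c).submatrix id f).det| = 1 ∨
      |((identityAppendCol fun _ => c).submatrix id f).det| = |c| := by
  rcases det_identityAppendCol_submatrix (fun _ => c) hf with ⟨σ, hσ⟩ | ⟨σ, -, hσ⟩ <;>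
    rcases Int.units_eq_one_or σ.sign with h | h <;> simp [hσ, h]

end Matrix

/-- For `r ≥ 2`, `Δ ≥ 1` and `r ≥ 2Δ − 1`, the maximum number of pairwise distinct
columns of a rank-`r` integer matrix all of whose `r × r` minors are non-zero with
absolute value at most `Δ` is exactly `r + 1`. -/
theorem g_eq_r_add_one (r : ℕ) (Δ : ℤ) (hr : 2 ≤ r) (hΔ : 1 ≤ Δ)
    (hrΔ : 2 * Δ - 1 ≤ (r : ℤ)) :
    IsGreatest {n : ℕ | ∃ A : Matrix (Fin r) (Fin n) ℤ,
      Function.Injective (fun j => fun i => A i j) ∧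
      A.rank = r ∧
      ∀ f : Fin r → Fin n, Function.Injective f →
        (A.submatrix id f).det ≠ 0 ∧ |(A.submatrix id f).det| ≤ Δ} (r + 1) := by
  refine ⟨⟨Matrix.identityAppendCol fun _ => Δ,
    Matrix.injective_col_identityAppendCol_const hr (by omega),
    Matrix.rank_identityAppendCol _, fun f hf => ?_⟩, ?_⟩
  · rw [← abs_ne_zero]
    rcases Matrix.abs_det_identityAppendCol_const_submatrix Δ hf with h | h <;> rw [h]
    · exact ⟨one_ne_zero, hΔ⟩
    · rw [abs_of_pos (by omega)]
      omega
  · rintro n ⟨A, -, -, hA⟩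
    lift Δ to ℕ using (by omega)
    obtain ⟨p, hp, hΔp, hpr⟩ :=
      Nat.exists_prime_lt_le_of_two_mul_le (d := Δ) (by omega) hr (by omega)
    have := Fact.mk hp
    exact card_le_of_abs_det_submatrix_lt hpr A fun f hf =>
      ⟨(hA f hf).1, (hA f hf).2.trans_lt (by exact_mod_cast hΔp)⟩
end
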